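/- Fix η > 0 and set 𝒱 = 𝒱^N(T) ≥ 1, Q = sup_{s∈[0,T]} Q^N(R^N(s),s) and Δ₁ = 1/(4C₇ 𝒱^{4/3+η} Q^{1/3}), where C₇ is such that |E^N(x,s)| ≤ C₇ 𝒱^{4/3} Q^{1/3} for all x and s ∈ [0,T]. Let (X,V) and (Y,W) be two characteristics of the same partial dynamics and let t ∈ [0,T] with t + Δ₁ ≤ T. Then: (a) if |V₁(t) − W₁(t)| ≤ 𝒱^{−η}, then sup_{s∈[t,t+Δ₁]} |V₁(s) − W₁(s)| ≤ 2𝒱^{−η}; (b) if |V₁(t) − W₁(t)| ≥ 𝒱^{−η}, then inf_{s∈[t,t+Δ₁]} |V₁(s) − W₁(s)| ≥ ½𝒱^{−η}. -/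

import Mathlib

noncomputable section
open MeasureTheory Real Set

/-- Three-dimensional Euclidean space. -/
abbrev E3 : Type := EuclideanSpace ℝ (Fin 3)

/-- The cross product on `ℝ³`. -/
def cross3 (a b : E3) : E3 :=
  WithLp.toLp 2 ![a 1 * b 2 - a 2 * b 1, a 2 * b 0 - a 0 * b 2, a 0 * b 1 - a 1 * b 0]

/-- The open cylinder of radius `A` about the `x₁`-axis. -/
def cyl (A : ℝ) : Set E3 := {x : E3 | x 1 ^ 2 + x 2 ^ 2 < A ^ 2}

/-- The external magnetic field `B(x) = ((A² - (x₂²+x₃²))^{-θ}, 0, 0)`. -/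
def Bf (A θ : ℝ) (x : E3) : E3 := WithLp.toLp 2 ![(A ^ 2 - (x 1 ^ 2 + x 2 ^ 2)) ^ (-θ), 0, 0]

/-- A solution of the partial dynamics with velocity cutoff `N` on the time interval `[0,T]`:
characteristics `(X,V)`, phase-space density `f`, spatial density `ρ` and self-consistent
electric field `EE`, with `f` transported along the measure-preserving characteristic flow
from the truncated initial datum `f₀ · 1_{b(N)}`. -/
structure PD (A Abar θ T : ℝ) (f₀ : E3 → E3 → ℝ) (N : ℕ) where
  X : E3 → E3 → ℝ → E3
  V : E3 → E3 → ℝ → E3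
  f : E3 → E3 → ℝ → ℝ
  ρ : E3 → ℝ → ℝ
  EE : E3 → ℝ → E3
  init_X : ∀ x v, X x v 0 = x
  init_V : ∀ x v, V x v 0 = v
  ode_X : ∀ x v, x ∈ cyl Abar → ‖v‖ < N → ∀ t ∈ Icc (0:ℝ) T,
    HasDerivAt (X x v) (V x v t) t
  ode_V : ∀ x v, x ∈ cyl Abar → ‖v‖ < N → ∀ t ∈ Icc (0:ℝ) T,
    HasDerivAt (V x v) (EE (X x v t) t + cross3 (V x v t) (Bf A θ (X x v t))) t
  f_init : ∀ x v, f x v 0 = if ‖v‖ < N then f₀ x v else 0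
  f_flow : ∀ x v, ∀ t ∈ Icc (0:ℝ) T, f (X x v t) (V x v t) t = f x v 0
  flow_mp : ∀ t ∈ Icc (0:ℝ) T,
    MeasurePreserving (fun p : E3 × E3 => (X p.1 p.2 t, V p.1 p.2 t)) volume volume
  flow_bij : ∀ t ∈ Icc (0:ℝ) T,
    Function.Bijective (fun p : E3 × E3 => (X p.1 p.2 t, V p.1 p.2 t))
  rho_def : ∀ x t, ρ x t = ∫ v : E3, f x v t
  E_def : ∀ x t, EE x t = ∫ y : E3, (ρ y t / ‖x - y‖ ^ 3) • (x - y)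

/-- The maximal velocity `𝒱^N(t) = max{C₄, sup_{s≤t} sup_{(x,v)∈D₀×b(N)} |V^N(s)|}`. -/
def maxV {A Abar θ T : ℝ} {f₀ : E3 → E3 → ℝ} {N : ℕ} (P : PD A Abar θ T f₀ N)
    (C₄ t : ℝ) : ℝ :=
  max C₄ (sSup {r : ℝ | ∃ s ∈ Icc (0:ℝ) t, ∃ x ∈ cyl Abar, ∃ v : E3,
    ‖v‖ < (N : ℝ) ∧ r = ‖P.V x v s‖})

/-- The maximal displacement `R^N(t) = 1 + ∫₀ᵗ 𝒱^N(s) ds`. -/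
def Rdisp {A Abar θ T : ℝ} {f₀ : E3 → E3 → ℝ} {N : ℕ} (P : PD A Abar θ T f₀ N)
    (C₄ t : ℝ) : ℝ :=
  1 + ∫ s in (0:ℝ)..t, maxV P C₄ s

/-- The local energy `W^N(μ,R,t)` associated to the mollifier `φ`. -/
def Wloc {A Abar θ T : ℝ} {f₀ : E3 → E3 → ℝ} {N : ℕ} (P : PD A Abar θ T f₀ N)
    (φ : ℝ → ℝ) (μ R t : ℝ) : ℝ :=
  (1/2) * (∫ x : E3, φ (|x 0 - μ| / R) * ∫ v : E3, ‖v‖ ^ 2 * P.f x v t)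
  + (1/2) * (∫ x : E3, φ (|x 0 - μ| / R) * P.ρ x t * ∫ y : E3, P.ρ y t / ‖x - y‖)

/-- `Q^N(R,t) = max{1, sup_μ W^N(μ,R,t)}`. -/
def Qloc {A Abar θ T : ℝ} {f₀ : E3 → E3 → ℝ} {N : ℕ} (P : PD A Abar θ T f₀ N)
    (φ : ℝ → ℝ) (R t : ℝ) : ℝ :=
  max 1 (⨆ μ : ℝ, Wloc P φ μ R t)


/-- Each coordinate of a Euclidean vector is bounded by its norm. -/
lemma abs_comp_le_norm (z : E3) (i : Fin 3) : |z i| ≤ ‖z‖ := by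
  rw [EuclideanSpace.norm_eq]
  have h : |z i| = Real.sqrt (‖z i‖ ^ 2) := by rw [Real.sqrt_sq_eq_abs]; simp
  rw [h]
  exact Real.sqrt_le_sqrt (Finset.single_le_sum (f := fun j => ‖z j‖ ^ 2)
    (fun j _ => by positivity) (Finset.mem_univ i))

lemma hasDerivAt_comp0 (f : ℝ → E3) (f' : E3) (s : ℝ) (h : HasDerivAt f f' s) :
    HasDerivAt (fun s => f s 0) (f' 0) s := by
  exact (EuclideanSpace.proj (0 : Fin 3)).hasFDerivAt.comp_hasDerivAt s h

/-- Lemma 1 of the paper: on a time window of length `Δ₁ = 1/(4C₇𝒱^{4/3+η}Q^{1/3})`, the gap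
between the first velocity components of two characteristics stays of order `𝒱^{-η}`:
if initially `≤ 𝒱^{-η}` it stays `≤ 2𝒱^{-η}`, and if initially `≥ 𝒱^{-η}` it stays
`≥ ½𝒱^{-η}`. -/
theorem velocity_gap_stability
    (A Abar θ T C₀ lam C₁ α C₄ : ℝ)
    (hA : 0 < A) (hAbar1 : A / 2 < Abar) (hAbar2 : Abar < A) (hθ : 2 < θ) (hT : 0 < T)
    (hC₀ : 0 < C₀) (hlam : 0 < lam) (hC₁ : 0 < C₁) (hα : 5 / 9 < α) (hC₄ : 1 ≤ C₄)
    (f₀ : E3 → E3 → ℝ) (hf₀meas : Measurable (Function.uncurry f₀))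
    (hf₀nn : ∀ x v, 0 ≤ f₀ x v)
    (hf₀supp : ∀ x v, x ∉ cyl Abar → f₀ x v = 0)
    (hf₀gauss : ∀ x v, f₀ x v ≤ C₀ * Real.exp (-lam * ‖v‖ ^ 2))
    (φ : ℝ → ℝ) (hφsmooth : ContDiff ℝ (⊤ : ℕ∞) φ)
    (hφone : ∀ a ∈ Icc (0:ℝ) 1, φ a = 1) (hφzero : ∀ a : ℝ, 2 ≤ a → φ a = 0)
    (hφrange : ∀ a : ℝ, 0 ≤ φ a ∧ φ a ≤ 1)
    (hφderiv : ∀ a : ℝ, -2 ≤ deriv φ a ∧ deriv φ a ≤ 0)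
    (η C₇ : ℝ) (hη : 0 < η) (hC₇ : 0 < C₇)
    (N : ℕ) (P : PD A Abar θ T f₀ N)
    (VV QQ Δ₁ : ℝ)
    (hVV : VV = maxV P C₄ T)
    (hVV1 : 1 ≤ VV)
    (hQQ : QQ = ⨆ s : Icc (0:ℝ) T, Qloc P φ (Rdisp P C₄ (s:ℝ)) (s:ℝ))
    (hΔ : Δ₁ = 1 / (4 * C₇ * VV ^ ((4:ℝ)/3 + η) * QQ ^ ((1:ℝ)/3)))
    (hE : ∀ z : E3, ∀ s ∈ Icc (0:ℝ) T, ‖P.EE z s‖ ≤ C₇ * VV ^ ((4:ℝ)/3) * QQ ^ ((1:ℝ)/3))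
    (x v y w : E3) (hx : x ∈ cyl Abar) (hv : ‖v‖ < N) (hy : y ∈ cyl Abar) (hw : ‖w‖ < N)
    (t : ℝ) (ht : t ∈ Icc (0:ℝ) T) (ht' : t + Δ₁ ≤ T) :
    (|P.V x v t 0 - P.V y w t 0| ≤ VV ^ (-η) →
      ∀ s ∈ Icc t (t + Δ₁), |P.V x v s 0 - P.V y w s 0| ≤ 2 * VV ^ (-η)) ∧
    (VV ^ (-η) ≤ |P.V x v t 0 - P.V y w t 0| →
      ∀ s ∈ Icc t (t + Δ₁), (1/2) * VV ^ (-η) ≤ |P.V x v s 0 - P.V y w s 0|) := by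
  have hVVpos : (0:ℝ) < VV := lt_of_lt_of_le one_pos hVV1
  have hQQnn : 0 ≤ QQ := by
    rw [hQQ]
    exact Real.iSup_nonneg fun s => le_trans zero_le_one (le_max_left _ _)
  set C : ℝ := C₇ * VV ^ ((4:ℝ)/3) * QQ ^ ((1:ℝ)/3) with hCdef
  have hCnn : 0 ≤ C := by positivity
  have hΔnn : 0 ≤ Δ₁ := by rw [hΔ]; positivity
  have hVηpos : (0:ℝ) < VV ^ (-η) := Real.rpow_pos_of_pos hVVpos _
  -- the key arithmetic bound
  have hmain : 2 * C * Δ₁ ≤ (1/2) * VV ^ (-η) := by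
    rcases eq_or_lt_of_le hQQnn with hQ0 | hQpos
    · have hq : QQ ^ ((1:ℝ)/3) = 0 := by
        rw [← hQ0]; exact Real.zero_rpow (by norm_num)
      have : C = 0 := by rw [hCdef, hq]; ring
      rw [this]; nlinarith
    · have h1 : (VV ^ ((4:ℝ)/3) : ℝ) ≠ 0 := (Real.rpow_pos_of_pos hVVpos _).ne'
      have h2 : (VV ^ (η:ℝ) : ℝ) ≠ 0 := (Real.rpow_pos_of_pos hVVpos _).ne'
      have h3 : (QQ ^ ((1:ℝ)/3) : ℝ) ≠ 0 := (Real.rpow_pos_of_pos hQpos _).ne'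
      have heq : 2 * C * Δ₁ = (1/2) * VV ^ (-η) := by
        rw [hΔ, hCdef, Real.rpow_add hVVpos, Real.rpow_neg hVVpos.le]
        field_simp
        ring
      exact le_of_eq heq
  -- inclusion of the time window
  have hsub : Icc t (t + Δ₁) ⊆ Icc (0:ℝ) T := fun s hs =>
    ⟨le_trans ht.1 hs.1, le_trans hs.2 ht'⟩
  -- component derivative of a characteristic velocity
  have hd : ∀ (x v : E3), x ∈ cyl Abar → ‖v‖ < N → ∀ s ∈ Icc (0:ℝ) T,
      HasDerivAt (fun s => P.V x v s 0) (P.EE (P.X x v s) s 0) s := by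
    intro x v hx hv s hs
    have h := P.ode_V x v hx hv s hs
    have h2 := hasDerivAt_comp0 _ _ s h
    simpa [PiLp.add_apply, cross3, Bf] using h2
  set F : ℝ → ℝ := fun s => P.V x v s 0 - P.V y w s 0 with hF
  set F' : ℝ → ℝ := fun s => P.EE (P.X x v s) s 0 - P.EE (P.X y w s) s 0 with hF'
  have hderivW : ∀ s ∈ Icc t (t + Δ₁), HasDerivWithinAt F (F' s) (Icc t (t + Δ₁)) s := by
    intro s hs
    exact ((hd x v hx hv s (hsub hs)).sub (hd y w hy hw s (hsub hs))).hasDerivWithinAt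
  have hbound : ∀ s ∈ Ico t (t + Δ₁), ‖F' s‖ ≤ 2 * C := by
    intro s hs
    have hs' : s ∈ Icc (0:ℝ) T := hsub ⟨hs.1, hs.2.le⟩
    have e1 : |P.EE (P.X x v s) s 0| ≤ C :=
      le_trans (abs_comp_le_norm _ _) (hE _ s hs')
    have e2 : |P.EE (P.X y w s) s 0| ≤ C :=
      le_trans (abs_comp_le_norm _ _) (hE _ s hs')
    have := abs_sub (P.EE (P.X x v s) s 0) (P.EE (P.X y w s) s 0)
    rw [Real.norm_eq_abs]
    calc |F' s| ≤ |P.EE (P.X x v s) s 0| + |P.EE (P.X y w s) s 0| := abs_sub _ _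
      _ ≤ 2 * C := by linarith
  have key : ∀ s ∈ Icc t (t + Δ₁), |F s - F t| ≤ (1/2) * VV ^ (-η) := by
    intro s hs
    have h1 : ‖F s - F t‖ ≤ 2 * C * (s - t) :=
      norm_image_sub_le_of_norm_deriv_le_segment' hderivW hbound s hs
    have h2 : 2 * C * (s - t) ≤ 2 * C * Δ₁ :=
      mul_le_mul_of_nonneg_left (by linarith [hs.2]) (by linarith)
    rw [Real.norm_eq_abs] at h1
    linarith
  have hFt : F t = P.V x v t 0 - P.V y w t 0 := rfl
  constructor
  · intro hinit s hs
    rw [← hFt] at hinit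
    have hFs : F s = P.V x v s 0 - P.V y w s 0 := rfl
    rw [show |P.V x v s 0 - P.V y w s 0| = |F s| from by rw [hFs]]
    have hk := key s hs
    have h1 : |F s| - |F t| ≤ |F s - F t| := abs_sub_abs_le_abs_sub _ _
    linarith
  · intro hinit s hs
    rw [← hFt] at hinit
    have hFs : F s = P.V x v s 0 - P.V y w s 0 := rfl
    rw [show |P.V x v s 0 - P.V y w s 0| = |F s| from by rw [hFs]]
    have hk := key s hs
    have h1 : |F t| - |F s| ≤ |F t - F s| := abs_sub_abs_le_abs_sub _ _
    have h2 : |F t - F s| = |F s - F t| := abs_sub_comm _ _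
    linarith
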